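/- arXiv:2011.11742 — 2 statements merged into one kernel-verified Lean document; each statement's English description precedes it below -/
import Mathlib

section
/- Let A be an n×n positive matrix with simple Perron eigenvalue λ*, right Perron eigenvector ū and left Perron eigenvector v̄ with (ū, v̄) = 1. If B is a matrix such that (B ū, v̄) = 0, then the equation (A − λ* I) w = −B ū has a solution w, and for any such solution the second-order variation of λ* under the perturbation A + εB is δ²λ* = 2(B w, v̄), i.e. δ²λ* = −2(B (A − λ* I)^{+} B ū, v̄) where (A − λ*I)^{+} denotes an inverse on the complement of span(ū). -/
/-!
Normalize the perturbed Perron vectors `x ε` by `x ε ⬝ᵥ v = 1`; positivity of `v` makes them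
bounded. Write `M = A - λ I`, `r = x - u` and `δ = λ(ε) - λ`. Pairing the eigen-equation with `v`
gives `δ = ε (B r, v)`, and `M r = δ x - ε B x`. Since `M` is invertible on `v⊥` (through
`(M + u vᵀ)⁻¹`) and `r ⊥ v`, this bootstraps `r = O(1) ⇒ δ = O(ε) ⇒ r = O(ε) ⇒ δ = O(ε²)`.
For the solution `w ⊥ v` of `M w = -B u` one has `M (r - ε w) = δ x - ε B r`, so `r - ε w = O(ε²)`
and `δ - ε² (B w, v) = ε (B (r - ε w), v) = O(ε³)`. Any two solutions of `M w = -B u` differ by a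
multiple of `u`, which `(B ·, v)` annihilates.
-/

open Asymptotics Filter Matrix Topology

theorem norm_le_sum_inv_of_dotProduct_eq_one {ι : Type*} [Fintype ι] {x v : ι → ℝ}
    (hx : ∀ i, 0 ≤ x i) (hv : ∀ i, 0 < v i) (hxv : x ⬝ᵥ v = 1) : ‖x‖ ≤ ∑ i, (v i)⁻¹ := by
  refine (pi_norm_le_iff_of_nonneg (Finset.sum_nonneg fun i _ => (inv_pos.2 (hv i)).le)).2
    fun i => ?_
  have hxi : x i * v i ≤ 1 :=
    hxv ▸ Finset.single_le_sum (f := fun j => x j * v j)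
      (fun j _ => mul_nonneg (hx j) (hv j).le) (Finset.mem_univ i)
  calc ‖x i‖ = x i := Real.norm_of_nonneg (hx i)
    _ ≤ (v i)⁻¹ := by rwa [← one_div, le_div_iff₀ (hv i)]
    _ ≤ ∑ j, (v j)⁻¹ := Finset.single_le_sum (f := fun j => (v j)⁻¹)
      (fun j _ => (inv_pos.2 (hv j)).le) (Finset.mem_univ i)

namespace Matrix

section CommSemiring

variable {R m n : Type*} [CommSemiring R] [Fintype n]

theorem dotProduct_mulVec_eq_zero_of_vecMul_eq_zero [Fintype m] {M : Matrix m n R} {v : m → R}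
    (hMv : v ᵥ* M = 0) (x : n → R) : M *ᵥ x ⬝ᵥ v = 0 := by
  rw [dotProduct_comm, dotProduct_mulVec, hMv, zero_dotProduct]

theorem vecMulVec_mulVec_eq_smul (u : m → R) (v x : n → R) :
    vecMulVec u v *ᵥ x = (x ⬝ᵥ v) • u := by
  rw [vecMulVec_mulVec, op_smul_eq_smul, dotProduct_comm]

end CommSemiring

section Bordered

variable {K ι : Type*} [Field K] [Fintype ι] [DecidableEq ι] {M : Matrix ι ι K} {u v : ι → K}

theorem isUnit_det_add_vecMulVec (hker : ∀ x, M *ᵥ x = 0 → ∃ c : K, x = c • u)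
    (hMv : v ᵥ* M = 0) (huv : u ⬝ᵥ v = 1) : IsUnit (M + vecMulVec u v).det := by
  refine isUnit_iff_ne_zero.mpr fun hdet => ?_
  obtain ⟨x, hx0, hx⟩ := exists_mulVec_eq_zero_iff.mpr hdet
  rw [add_mulVec, vecMulVec_mulVec_eq_smul] at hx
  have hxv : x ⬝ᵥ v = 0 := by
    simpa [dotProduct_mulVec_eq_zero_of_vecMul_eq_zero hMv, huv] using congrArg (· ⬝ᵥ v) hx
  obtain ⟨c, rfl⟩ := hker x (by simpa [hxv] using hx)
  simp_all

/-- `(M + u vᵀ)⁻¹` inverts `M` on the hyperplane `v⊥`, which `M` maps onto itself. -/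
theorem exists_inv_on_dotProduct_eq_zero (hker : ∀ x, M *ᵥ x = 0 → ∃ c : K, x = c • u)
    (hMv : v ᵥ* M = 0) (huv : u ⬝ᵥ v = 1) :
    ∃ N : Matrix ι ι K, (∀ x, x ⬝ᵥ v = 0 → N *ᵥ (M *ᵥ x) = x) ∧
      ∀ y, y ⬝ᵥ v = 0 → M *ᵥ (N *ᵥ y) = y ∧ N *ᵥ y ⬝ᵥ v = 0 := by
  have hL := isUnit_det_add_vecMulVec hker hMv huv
  have hLx : ∀ x, (M + vecMulVec u v) *ᵥ x = M *ᵥ x + (x ⬝ᵥ v) • u := fun x => by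
    rw [add_mulVec, vecMulVec_mulVec_eq_smul]
  refine ⟨(M + vecMulVec u v)⁻¹, fun x hx => ?_, fun y hy => ?_⟩
  · rw [← add_zero (M *ᵥ x), ← zero_smul K u, ← hx, ← hLx, mulVec_mulVec,
      nonsing_inv_mul _ hL, one_mulVec]
  · have h := hLx ((M + vecMulVec u v)⁻¹ *ᵥ y)
    rw [mulVec_mulVec, mul_nonsing_inv _ hL, one_mulVec] at h
    have hzv : (M + vecMulVec u v)⁻¹ *ᵥ y ⬝ᵥ v = 0 := by
      have := congrArg (· ⬝ᵥ v) h
      rwa [add_dotProduct, dotProduct_mulVec_eq_zero_of_vecMul_eq_zero hMv, smul_dotProduct, huv,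
        smul_eq_mul, mul_one, zero_add, hy, eq_comm] at this
    rw [hzv, zero_smul, add_zero] at h
    exact ⟨h.symm, hzv⟩

theorem exists_mulVec_eq_of_dotProduct_eq_zero (hker : ∀ x, M *ᵥ x = 0 → ∃ c : K, x = c • u)
    (hMv : v ᵥ* M = 0) (huv : u ⬝ᵥ v = 1) {y : ι → K} (hy : y ⬝ᵥ v = 0) : ∃ z, M *ᵥ z = y :=
  have ⟨_, _, hMN⟩ := exists_inv_on_dotProduct_eq_zero hker hMv huv
  ⟨_, (hMN y hy).1⟩

end Bordered

theorem vecMul_sub_smul_one_eq_zero {R ι : Type*} [CommRing R] [Fintype ι] [DecidableEq ι]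
    {A : Matrix ι ι R} {lam : R} {v : ι → R} (hv : v ᵥ* A = lam • v) :
    v ᵥ* (A - lam • 1) = 0 := by
  rw [vecMul_sub, vecMul_smul, vecMul_one, hv, sub_self]

theorem dotProduct_mulVec_eq_of_mulVec_eq {R ι : Type*} [CommRing R] [Fintype ι]
    {M B : Matrix ι ι R} {u v w₁ w₂ : ι → R} (hker : ∀ x, M *ᵥ x = 0 → ∃ c : R, x = c • u)
    (hBu : B *ᵥ u ⬝ᵥ v = 0) (h : M *ᵥ w₁ = M *ᵥ w₂) : B *ᵥ w₁ ⬝ᵥ v = B *ᵥ w₂ ⬝ᵥ v := by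
  obtain ⟨c, hc⟩ := hker (w₁ - w₂) (by rw [mulVec_sub, h, sub_self])
  rw [← sub_eq_zero, ← sub_dotProduct, ← mulVec_sub, hc, mulVec_smul, smul_dotProduct, hBu,
    smul_zero]

section Asymptotics

variable {α 𝕜 m n : Type*} [NormedField 𝕜] [Fintype m] [Fintype n] {l : Filter α}

theorem isBigO_mulVec (N : Matrix m n 𝕜) (f : α → n → 𝕜) : (fun a => N *ᵥ f a) =O[l] f := by
  let _ : SeminormedAddCommGroup (Matrix m n 𝕜) := Matrix.linftyOpSeminormedAddCommGroup
  exact IsBigO.of_bound ‖N‖ (Eventually.of_forall fun a => linfty_opNorm_mulVec N (f a))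

theorem isBigO_dotProduct (f : α → n → 𝕜) (v : n → 𝕜) : (fun a => f a ⬝ᵥ v) =O[l] f := by
  have h : ∀ a, f a ⬝ᵥ v = (replicateRow (Fin 1) v *ᵥ f a) 0 := fun a => by
    simp [mulVec, dotProduct_comm]
  simp only [h]
  exact (IsBigO.of_bound 1 (Eventually.of_forall fun a => by
    simpa using norm_le_pi_norm (replicateRow (Fin 1) v *ᵥ f a) 0)).trans (isBigO_mulVec _ f)

variable {ι : Type*} [Fintype ι] {B : Matrix ι ι 𝕜}

theorem isBigO_mul_dotProduct_mulVec {g : 𝕜 → ι → 𝕜} {k : ℕ} {l : Filter 𝕜} (v : ι → 𝕜)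
    (hg : g =O[l] fun ε => ε ^ k) :
    (fun ε => ε * (B *ᵥ g ε ⬝ᵥ v)) =O[l] fun ε => ε ^ (k + 1) :=
  ((isBigO_refl id l).mul ((isBigO_dotProduct _ v).trans ((isBigO_mulVec B g).trans hg)))
    |>.congr_right fun ε => by simp only [id, pow_succ, mul_comm]

theorem isBigO_mulVec_smul_sub_smul_mulVec {δ : 𝕜 → 𝕜} {x y : 𝕜 → ι → 𝕜} {k : ℕ} {l : Filter 𝕜}
    (N : Matrix ι ι 𝕜) (hδ : δ =O[l] fun ε => ε ^ (k + 1)) (hx : x =O[l] fun _ => (1 : 𝕜))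
    (hy : y =O[l] fun ε => ε ^ k) :
    (fun ε => N *ᵥ (δ ε • x ε - ε • B *ᵥ y ε)) =O[l] fun ε => ε ^ (k + 1) := by
  refine (isBigO_mulVec N _).trans (IsBigO.sub ?_ ?_)
  · exact (hδ.smul hx).congr_right fun ε => by rw [smul_eq_mul, mul_one]
  · exact ((isBigO_refl id l).smul ((isBigO_mulVec B y).trans hy)).congr_right
      fun ε => by rw [id, smul_eq_mul, pow_succ, mul_comm]

end Asymptotics

section Perturbation

variable {R ι : Type*} [CommRing R] [Fintype ι] {A B : Matrix ι ι R}
  {lam μ ε : R} {u v x : ι → R}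

theorem eigenvalue_sub_eq_mul_dotProduct (hv : v ᵥ* A = lam • v) (hBu : B *ᵥ u ⬝ᵥ v = 0)
    (hx : (A + ε • B) *ᵥ x = μ • x) (hxv : x ⬝ᵥ v = 1) :
    μ - lam = ε * (B *ᵥ (x - u) ⬝ᵥ v) := by
  have hAx : A *ᵥ x ⬝ᵥ v = lam := by
    rw [dotProduct_comm, dotProduct_mulVec, hv, smul_dotProduct, dotProduct_comm, hxv, smul_eq_mul,
      mul_one]
  have := congrArg (· ⬝ᵥ v) hx
  simp only [add_mulVec, smul_mulVec, add_dotProduct, smul_dotProduct, hAx, hxv, smul_eq_mul,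
    mul_one] at this
  rw [mulVec_sub, sub_dotProduct, hBu, sub_zero, ← this]
  ring

theorem mulVec_sub_eq_of_mulVec_add_smul [DecidableEq ι] (hu : A *ᵥ u = lam • u)
    (hx : (A + ε • B) *ᵥ x = μ • x) :
    (A - lam • 1) *ᵥ (x - u) = (μ - lam) • x - ε • B *ᵥ x := by
  rw [add_mulVec, smul_mulVec] at hx
  rw [mulVec_sub, sub_mulVec, sub_mulVec, smul_mulVec, smul_mulVec, one_mulVec, one_mulVec, hu,
    sub_smul, ← hx]
  abel

end Perturbation

theorem isLittleO_perturbed_eigenvalue_sub_second_order {𝕜 ι : Type*} [NormedField 𝕜]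
    [Fintype ι] [DecidableEq ι] {A B : Matrix ι ι 𝕜} {lam : 𝕜}
    {u v w : ι → 𝕜} {x : 𝕜 → ι → 𝕜} {μ : 𝕜 → 𝕜} (hu : A *ᵥ u = lam • u)
    (hv : v ᵥ* A = lam • v) (hker : ∀ y, (A - lam • 1) *ᵥ y = 0 → ∃ c : 𝕜, y = c • u)
    (huv : u ⬝ᵥ v = 1) (hBu : B *ᵥ u ⬝ᵥ v = 0) (hw : (A - lam • 1) *ᵥ w = -(B *ᵥ u))
    (hx : ∀ᶠ ε in 𝓝 0, (A + ε • B) *ᵥ x ε = μ ε • x ε ∧ x ε ⬝ᵥ v = 1)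
    (hxb : x =O[𝓝 0] fun _ => (1 : 𝕜)) :
    (fun ε => μ ε - lam - ε ^ 2 * (B *ᵥ w ⬝ᵥ v)) =o[𝓝 0] fun ε => ε ^ 2 := by
  obtain ⟨N, hNM, hMN⟩ := exists_inv_on_dotProduct_eq_zero hker (vecMul_sub_smul_one_eq_zero hv) huv
  obtain ⟨hMw₀, hw₀v⟩ := hMN (-(B *ᵥ u)) (by rw [neg_dotProduct, hBu, neg_zero])
  set w₀ := N *ᵥ -(B *ᵥ u)
  rw [dotProduct_mulVec_eq_of_mulVec_eq hker hBu (hw.trans hMw₀.symm)]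
  have hδ : (fun ε => μ ε - lam) =ᶠ[𝓝 0] fun ε => ε * (B *ᵥ (x ε - u) ⬝ᵥ v) :=
    hx.mono fun ε h => eigenvalue_sub_eq_mul_dotProduct hv hBu h.1 h.2
  have hrv : ∀ᶠ ε in 𝓝 0, (x ε - u) ⬝ᵥ v = 0 :=
    hx.mono fun ε h => by rw [sub_dotProduct, h.2, huv, sub_self]
  have hr : (fun ε => x ε - u) =ᶠ[𝓝 0] fun ε => N *ᵥ ((μ ε - lam) • x ε - ε • B *ᵥ x ε) :=
    (hx.and hrv).mono fun ε h => by
      dsimp only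
      rw [← mulVec_sub_eq_of_mulVec_add_smul hu h.1.1, hNM _ h.2]
  have hrw : (fun ε => x ε - u - ε • w₀) =ᶠ[𝓝 0]
      fun ε => N *ᵥ ((μ ε - lam) • x ε - ε • B *ᵥ (x ε - u)) :=
    (hx.and hrv).mono fun ε h => by
      dsimp only
      rw [← hNM (x ε - u - ε • w₀) (by rw [sub_dotProduct, h.2, smul_dotProduct, hw₀v, smul_zero,
        sub_zero])]
      congr 1
      rw [mulVec_sub, mulVec_smul, hMw₀, mulVec_sub_eq_of_mulVec_add_smul hu h.1.1, mulVec_sub,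
        smul_neg, smul_sub]
      abel
  have hfin : (fun ε => μ ε - lam - ε ^ 2 * (B *ᵥ w₀ ⬝ᵥ v)) =ᶠ[𝓝 0]
      fun ε => ε * (B *ᵥ (x ε - u - ε • w₀) ⬝ᵥ v) :=
    hδ.mono fun ε h => by
      dsimp only at h ⊢
      rw [h, mulVec_sub B (x ε - u), mulVec_smul, sub_dotProduct, smul_dotProduct, smul_eq_mul]
      ring
  have hx0 : x =O[𝓝 0] fun ε => ε ^ 0 := hxb.congr_right fun ε => (pow_zero ε).symm
  have hr0 : (fun ε => x ε - u) =O[𝓝 0] fun ε => ε ^ 0 :=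
    hx0.sub ((isBigO_const_const u one_ne_zero _).congr_right fun ε => (pow_zero ε).symm)
  have hδ1 := (isBigO_mul_dotProduct_mulVec v hr0).congr' hδ.symm EventuallyEq.rfl
  have hr1 := (isBigO_mulVec_smul_sub_smul_mulVec N hδ1 hxb hx0).congr' hr.symm EventuallyEq.rfl
  have hδ2 := (isBigO_mul_dotProduct_mulVec v hr1).congr' hδ.symm EventuallyEq.rfl
  have hrw2 := (isBigO_mulVec_smul_sub_smul_mulVec N hδ2 hxb hr1).congr' hrw.symm EventuallyEq.rfl
  exact ((isBigO_mul_dotProduct_mulVec v hrw2).congr' hfin.symm EventuallyEq.rfl).trans_isLittleO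
    (isLittleO_pow_pow (by norm_num))

theorem exists_isBigO_one_normalized_eigenvectors {ι α : Type*} [Fintype ι] [Nonempty ι]
    {l : Filter α} {A : α → Matrix ι ι ℝ} {μ : α → ℝ} {v : ι → ℝ} (hv : ∀ i, 0 < v i)
    (h : ∀ᶠ a in l, ∃ w : ι → ℝ, (∀ i, 0 < w i) ∧ A a *ᵥ w = μ a • w) :
    ∃ x : α → ι → ℝ, (∀ᶠ a in l, A a *ᵥ x a = μ a • x a ∧ x a ⬝ᵥ v = 1) ∧
      x =O[l] fun _ => (1 : ℝ) := by
  let P a (x : ι → ℝ) := A a *ᵥ x = μ a • x ∧ x ⬝ᵥ v = 1 ∧ ‖x‖ ≤ ∑ i, (v i)⁻¹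
  have hP : ∀ᶠ a in l, ∃ x, P a x := h.mono fun a ⟨w, hw, hAw⟩ => by
    have hs : 0 < w ⬝ᵥ v := Finset.sum_pos (fun i _ => mul_pos (hw i) (hv i)) Finset.univ_nonempty
    have hxv : (w ⬝ᵥ v)⁻¹ • w ⬝ᵥ v = 1 := by
      rw [smul_dotProduct, smul_eq_mul, inv_mul_cancel₀ hs.ne']
    refine ⟨(w ⬝ᵥ v)⁻¹ • w, by rw [mulVec_smul, hAw, smul_comm], hxv,
      norm_le_sum_inv_of_dotProduct_eq_one (fun i => ?_) hv hxv⟩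
    exact mul_nonneg (inv_pos.2 hs).le (hw i).le
  refine ⟨fun a => Classical.epsilon (P a), ?_, IsBigO.of_bound (∑ i, (v i)⁻¹) ?_⟩
  · exact hP.mono fun a ha => (Classical.epsilon_spec ha).imp_right And.left
  · exact hP.mono fun a ha => by simpa using (Classical.epsilon_spec ha).2.2

end Matrix

theorem stmt7_general {n : ℕ} (A B : Matrix (Fin n) (Fin n) ℝ)
    (lam : ℝ) (u v : Fin n → ℝ)
    (hv : ∀ i, 0 < v i)
    (hu_eig : A.mulVec u = lam • u)
    (hv_eig : A.transpose.mulVec v = lam • v)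
    -- simplicity of the Perron eigenvalue, for `A` and its transpose:
    (hsimple : ∀ x : Fin n → ℝ, A.mulVec x = lam • x → ∃ c : ℝ, x = c • u)
    (hnorm : ∑ i, u i * v i = 1)
    -- vanishing of the first-order variation:
    (hfirst : ∑ i, B.mulVec u i * v i = 0)
    (lamFun : ℝ → ℝ)
    (heig : ∀ᶠ ε in nhds (0 : ℝ), ∃ w : Fin n → ℝ, (∀ i, 0 < w i) ∧
      (A + ε • B).mulVec w = lamFun ε • w) :
    -- solvability (Fredholm alternative):
    (∃ w : Fin n → ℝ, (A - lam • (1 : Matrix (Fin n) (Fin n) ℝ)).mulVec w = -(B.mulVec u)) ∧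
    -- the second-order coefficient does not depend on the chosen solution:
    (∀ w₁ w₂ : Fin n → ℝ,
      (A - lam • (1 : Matrix (Fin n) (Fin n) ℝ)).mulVec w₁ = -(B.mulVec u) →
      (A - lam • (1 : Matrix (Fin n) (Fin n) ℝ)).mulVec w₂ = -(B.mulVec u) →
      ∑ i, B.mulVec w₁ i * v i = ∑ i, B.mulVec w₂ i * v i) ∧
    -- second-order expansion `δ²λ* = 2 (B w, v)`, i.e. `λ(ε) = λ* + ε²(Bw,v) + o(ε²)`:
    (∀ w : Fin n → ℝ,
      (A - lam • (1 : Matrix (Fin n) (Fin n) ℝ)).mulVec w = -(B.mulVec u) →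
      (fun ε : ℝ => lamFun ε - lam - ε ^ 2 * ∑ i, B.mulVec w i * v i)
        =o[nhds (0 : ℝ)] fun ε => ε ^ 2) := by
  have hker : ∀ x, (A - lam • 1) *ᵥ x = 0 → ∃ c : ℝ, x = c • u := fun x hx =>
    hsimple x (by rwa [sub_mulVec, smul_mulVec, one_mulVec, sub_eq_zero] at hx)
  have hv' : v ᵥ* A = lam • v := by rwa [← mulVec_transpose]
  obtain ⟨i, -, -⟩ := Finset.exists_ne_zero_of_sum_ne_zero (hnorm ▸ one_ne_zero)
  have : Nonempty (Fin n) := ⟨i⟩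
  obtain ⟨x, hx, hxb⟩ := exists_isBigO_one_normalized_eigenvectors hv heig
  refine ⟨?_, fun w₁ w₂ h₁ h₂ => dotProduct_mulVec_eq_of_mulVec_eq hker hfirst (h₁.trans h₂.symm),
    fun w hw =>
      isLittleO_perturbed_eigenvalue_sub_second_order hu_eig hv' hker hnorm hfirst hw hx hxb⟩
  exact exists_mulVec_eq_of_dotProduct_eq_zero hker (vecMul_sub_smul_one_eq_zero hv') hnorm
    (by rw [neg_dotProduct]; exact neg_eq_zero.2 hfirst)

/-- Second-order perturbation of a simple Perron eigenvalue. If the first-order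
term vanishes, `(B u, v) = 0`, then by the Fredholm alternative `(A - λ* I) w = - B u` is
solvable, the value `(B w, v)` is independent of the chosen solution `w`, and the perturbed
Perron eigenvalue satisfies `lamFun ε = λ* + ε² (B w, v) + o(ε²)`. -/
theorem stmt7 {n : ℕ} (A B : Matrix (Fin n) (Fin n) ℝ)
    (hA : ∀ i j, 0 < A i j) (lam : ℝ) (u v : Fin n → ℝ)
    (hlam_pos : 0 < lam)
    (hu : ∀ i, 0 < u i) (hv : ∀ i, 0 < v i)
    (hu_eig : A.mulVec u = lam • u)
    (hv_eig : A.transpose.mulVec v = lam • v)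
    -- simplicity of the Perron eigenvalue, for `A` and its transpose:
    (hsimple : ∀ x : Fin n → ℝ, A.mulVec x = lam • x → ∃ c : ℝ, x = c • u)
    (hsimpleT : ∀ x : Fin n → ℝ, A.transpose.mulVec x = lam • x → ∃ c : ℝ, x = c • v)
    (hnorm : ∑ i, u i * v i = 1)
    -- vanishing of the first-order variation:
    (hfirst : ∑ i, B.mulVec u i * v i = 0)
    (lamFun : ℝ → ℝ) (h0 : lamFun 0 = lam) (hcont : ContinuousAt lamFun 0)
    (heig : ∀ᶠ ε in nhds (0 : ℝ), ∃ w : Fin n → ℝ, (∀ i, 0 < w i) ∧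
      (A + ε • B).mulVec w = lamFun ε • w) :
    -- solvability (Fredholm alternative):
    (∃ w : Fin n → ℝ, (A - lam • (1 : Matrix (Fin n) (Fin n) ℝ)).mulVec w = -(B.mulVec u)) ∧
    -- the second-order coefficient does not depend on the chosen solution:
    (∀ w₁ w₂ : Fin n → ℝ,
      (A - lam • (1 : Matrix (Fin n) (Fin n) ℝ)).mulVec w₁ = -(B.mulVec u) →
      (A - lam • (1 : Matrix (Fin n) (Fin n) ℝ)).mulVec w₂ = -(B.mulVec u) →
      ∑ i, B.mulVec w₁ i * v i = ∑ i, B.mulVec w₂ i * v i) ∧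
    -- second-order expansion `δ²λ* = 2 (B w, v)`, i.e. `λ(ε) = λ* + ε²(Bw,v) + o(ε²)`:
    (∀ w : Fin n → ℝ,
      (A - lam • (1 : Matrix (Fin n) (Fin n) ℝ)).mulVec w = -(B.mulVec u) →
      (fun ε : ℝ => lamFun ε - lam - ε ^ 2 * ∑ i, B.mulVec w i * v i)
        =o[nhds (0 : ℝ)] fun ε => ε ^ 2) :=
  stmt7_general A B lam u v hv hu_eig hv_eig hsimple hnorm hfirst lamFun heig
end

section
/- Let A be a positive n×n matrix with Perron eigenvalue λ* > 1 and γ > 0. Then there exists a unique ū ∈ ℝⁿ with strictly positive entries satisfying A ū = e^{γ S(ū)} ū, namely ū = (γ⁻¹ ln λ* / S(w)) · w, where w is any positive Perron eigenvector of A and S denotes coordinate sum. -/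
/-!
A positive solution `ū` of `A ū = e^{γ S(ū)} ū` is a positive eigenvector of `A` for the
eigenvalue `e^{γ S(ū)}`, which by Perron–Frobenius must be `λ*`; simplicity of `λ*` makes `ū`
a multiple of `w`, and `e^{γ S(ū)} = λ*`, i.e. `S(ū) = γ⁻¹ ln λ*`, pins down the multiple.
Conversely that multiple of `w` is an eigenvector for `λ* = e^{γ S(ū)}`.
-/

open Finset

section CoordinateSum

variable {ι : Type*} [Fintype ι]

lemma sum_div_sum_smul (t : ℝ) {w : ι → ℝ} (hw : ∑ j, w j ≠ 0) :
    ∑ i, ((t / ∑ j, w j) • w) i = t := by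
  simp only [Pi.smul_apply, smul_eq_mul, ← mul_sum]
  exact div_mul_cancel₀ t hw

lemma eq_div_sum_smul_of_sum_eq {t d : ℝ} {w : ι → ℝ} (hw : ∑ j, w j ≠ 0)
    (hsum : ∑ i, (d • w) i = t) : d • w = (t / ∑ j, w j) • w := by
  simp only [Pi.smul_apply, smul_eq_mul, ← mul_sum] at hsum
  rw [← hsum, mul_div_cancel_right₀ d hw]

end CoordinateSum

lemma exp_mul_eq_iff_eq_inv_mul_log {γ lam s : ℝ} (hγ : γ ≠ 0) (hlam : 0 < lam) :
    Real.exp (γ * s) = lam ↔ s = γ⁻¹ * Real.log lam := by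
  rw [← Real.exp_log hlam, Real.exp_eq_exp, Real.log_exp, eq_inv_mul_iff_mul_eq₀ hγ, eq_comm]

theorem stmt11_general {n : ℕ} (hn : 0 < n) (A : Matrix (Fin n) (Fin n) ℝ)
    (γ lam : ℝ) (hγ : 0 < γ) (hlam : 1 < lam)
    (w : Fin n → ℝ) (hw : ∀ i, 0 < w i) (hw_eig : A.mulVec w = lam • w)
    -- Perron–Frobenius: `lam` is simple and is the only eigenvalue with a positive eigenvector:
    (hsimple : ∀ x : Fin n → ℝ, A.mulVec x = lam • x → ∃ c : ℝ, x = c • w)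
    (hunique_eig : ∀ (μ : ℝ) (x : Fin n → ℝ), (∀ i, 0 < x i) → A.mulVec x = μ • x → μ = lam) :
    (∀ i, 0 < (((γ⁻¹ * Real.log lam) / ∑ j, w j) • w) i) ∧
    A.mulVec (((γ⁻¹ * Real.log lam) / ∑ j, w j) • w) =
      Real.exp (γ * ∑ i, (((γ⁻¹ * Real.log lam) / ∑ j, w j) • w) i) •
        (((γ⁻¹ * Real.log lam) / ∑ j, w j) • w) ∧
    (∀ u : Fin n → ℝ, (∀ i, 0 < u i) → A.mulVec u = Real.exp (γ * ∑ i, u i) • u →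
      u = ((γ⁻¹ * Real.log lam) / ∑ j, w j) • w) := by
  have hSw : 0 < ∑ j, w j := sum_pos (fun j _ => hw j) ⟨⟨0, hn⟩, mem_univ _⟩
  have hexp_iff (s : ℝ) : Real.exp (γ * s) = lam ↔ s = γ⁻¹ * Real.log lam :=
    exp_mul_eq_iff_eq_inv_mul_log hγ.ne' (by linarith)
  refine ⟨fun i => ?_, ?_, fun u hu hu_eq => ?_⟩
  · have ht : 0 < γ⁻¹ * Real.log lam := mul_pos (inv_pos.2 hγ) (Real.log_pos hlam)
    exact mul_pos (div_pos ht hSw) (hw i)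
  · rw [(hexp_iff _).2 (sum_div_sum_smul _ hSw.ne'), Matrix.mulVec_smul, hw_eig, smul_comm]
  · have hμ := hunique_eig _ u hu hu_eq
    obtain ⟨d, rfl⟩ := hsimple u (by rw [hu_eq, hμ])
    exact eq_div_sum_smul_of_sum_eq hSw.ne' ((hexp_iff _).1 hμ)

/-- For a positive matrix `A` with simple Perron eigenvalue `λ* > 1` and
`γ > 0`, there is a unique strictly positive solution of `A ū = e^{γ S(ū)} ū`, namely the
Perron eigenvector `w` rescaled so that its coordinate sum is `γ⁻¹ ln λ*`. -/
theorem stmt11 {n : ℕ} (hn : 0 < n) (A : Matrix (Fin n) (Fin n) ℝ)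
    (hA : ∀ i j, 0 < A i j) (γ lam : ℝ) (hγ : 0 < γ) (hlam : 1 < lam)
    (w : Fin n → ℝ) (hw : ∀ i, 0 < w i) (hw_eig : A.mulVec w = lam • w)
    -- Perron–Frobenius: `lam` is simple and is the only eigenvalue with a positive eigenvector:
    (hsimple : ∀ x : Fin n → ℝ, A.mulVec x = lam • x → ∃ c : ℝ, x = c • w)
    (hunique_eig : ∀ (μ : ℝ) (x : Fin n → ℝ), (∀ i, 0 < x i) → A.mulVec x = μ • x → μ = lam) :
    (∀ i, 0 < (((γ⁻¹ * Real.log lam) / ∑ j, w j) • w) i) ∧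
    A.mulVec (((γ⁻¹ * Real.log lam) / ∑ j, w j) • w) =
      Real.exp (γ * ∑ i, (((γ⁻¹ * Real.log lam) / ∑ j, w j) • w) i) •
        (((γ⁻¹ * Real.log lam) / ∑ j, w j) • w) ∧
    (∀ u : Fin n → ℝ, (∀ i, 0 < u i) → A.mulVec u = Real.exp (γ * ∑ i, u i) • u →
      u = ((γ⁻¹ * Real.log lam) / ∑ j, w j) • w) :=
  stmt11_general hn A γ lam hγ hlam w hw hw_eig hsimple hunique_eig
end
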